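/- There is a constant C > 0 such that every 2-program P with n atoms has at most C · 3^{n/3} stable models (the exponent n/3 is a real number). -/
import Mathlib


/-- A clause of a propositional logic program: an optional head (a definite
clause if `head = some h`, a constraint if `head = none`), a positive body
and a negative body. -/
structure LPClause (α : Type) where
  head : Option α
  pos : Finset α
  neg : Finset α
deriving DecidableEq

/-- A program is a finite set of clauses. -/
abbrev LPProgram (α : Type) := Finset (LPClause α)

/-- The atoms occurring in a clause. -/
def LPClause.atoms {α : Type} [DecidableEq α] (c : LPClause α) : Finset α :=
  c.head.toFinset ∪ c.pos ∪ c.neg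

/-- The atoms occurring in a program. -/
def LPProgram.atoms {α : Type} [DecidableEq α] (P : LPProgram α) : Finset α :=
  P.sup LPClause.atoms

/-- `N` is closed under the Horn rules of the reduct `P^M`: for every definite
clause of `P` whose negative body is disjoint from `M`, if its positive body
is contained in `N` then so is its head. -/
def ClosedUnder {α : Type} (P : LPProgram α) (M : Finset α) (N : Set α) : Prop :=
  ∀ c ∈ P, ∀ h : α, c.head = some h → (∀ b ∈ c.neg, b ∉ M) →
    (↑c.pos : Set α) ⊆ N → h ∈ N

/-- `M` is a stable model of `P`: `M` is the least set closed under the rules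
of the reduct `P^M` (i.e. `M = lm(P^M)`), and `M` satisfies every constraint
of `P`. -/
def IsStable {α : Type} (P : LPProgram α) (M : Finset α) : Prop :=
  ClosedUnder P M ↑M ∧ (∀ N : Set α, ClosedUnder P M N → ↑M ⊆ N) ∧
  ∀ c ∈ P, c.head = none → ¬(c.pos ⊆ M ∧ ∀ b ∈ c.neg, b ∉ M)

/-- `P` is a `t`-program: every clause has at most `t` literals, counting the head. -/
def IsTProgram {α : Type} (P : LPProgram α) (t : ℕ) : Prop :=
  ∀ c ∈ P, c.pos.card + c.neg.card + (c.head.elim 0 fun _ => 1) ≤ t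

attribute [local instance] Classical.propDecidable


lemma cube_le_three_pow (k : ℕ) : k ^ 3 ≤ 3 ^ k := by
  induction k with
  | zero => norm_num
  | succ n ih =>
    rcases Nat.lt_or_ge n 3 with h | h
    · interval_cases n <;> norm_num
    · have h1 : (n + 1) ^ 3 ≤ 3 * n ^ 3 := by nlinarith [sq_nonneg n, h, Nat.one_le_iff_ne_zero.2 (by omega : n ≠ 0)]
      have h2 : 3 * n ^ 3 ≤ 3 * 3 ^ n := Nat.mul_le_mul_left 3 ih
      calc (n + 1) ^ 3 ≤ 3 * 3 ^ n := le_trans h1 h2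
        _ = 3 ^ (n + 1) := by rw [pow_succ]; ring

lemma nat_le_rpow (k : ℕ) : (k : ℝ) ≤ (3 : ℝ) ^ ((k : ℝ) / 3) := by
  have hb : ((3 : ℝ) ^ ((k : ℝ) / 3)) ^ (3 : ℕ) = (3 : ℝ) ^ (k : ℕ) := by
    rw [← Real.rpow_natCast ((3 : ℝ) ^ ((k : ℝ) / 3)) 3, ← Real.rpow_mul (by norm_num)]
    rw [show (k : ℝ) / 3 * ((3:ℕ) : ℝ) = (k : ℝ) by push_cast; ring]
    rw [Real.rpow_natCast]
  have hcube : ((k : ℝ)) ^ (3 : ℕ) ≤ ((3 : ℝ) ^ ((k : ℝ) / 3)) ^ (3 : ℕ) := by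
    rw [hb]
    exact_mod_cast cube_le_three_pow k
  have hpos : (0 : ℝ) ≤ (3 : ℝ) ^ ((k : ℝ) / 3) :=
    (Real.rpow_pos_of_pos (by norm_num) _).le
  exact le_of_pow_le_pow_left₀ (by norm_num) hpos hcube

/-- The family of "maximal independent sets": subsets of `V`, pairwise
non-related by `r`, such that every vertex of `V` outside is hit by `r`
from inside. -/
noncomputable def misFam {α : Type} (V : Finset α) (r : α → α → Prop) : Finset (Finset α) :=
  V.powerset.filter fun S =>
    (∀ u ∈ S, ∀ v ∈ S, ¬ r u v) ∧ ∀ v ∈ V, v ∉ S → ∃ u ∈ S, r u v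

lemma misFam_card_le {α : Type} [DecidableEq α] (r : α → α → Prop) :
    ∀ n : ℕ, ∀ V : Finset α, V.card ≤ n →
      ((misFam V r).card : ℝ) ≤ (3 : ℝ) ^ ((V.card : ℝ) / 3) := by
  intro n
  induction n with
  | zero =>
    intro V hV
    rw [Finset.card_eq_zero.1 (Nat.le_zero.1 hV)] at *
    have : (misFam (∅ : Finset α) r).card ≤ 1 := by
      refine le_trans (Finset.card_le_card (Finset.filter_subset _ _)) ?_
      simp
    calc ((misFam (∅ : Finset α) r).card : ℝ) ≤ 1 := by exact_mod_cast this
      _ = (3 : ℝ) ^ (((∅ : Finset α).card : ℝ) / 3) := by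
          simp
  | succ n ih =>
    intro V hV
    rcases V.eq_empty_or_nonempty with rfl | hne
    · have : (misFam (∅ : Finset α) r).card ≤ 1 := by
        refine le_trans (Finset.card_le_card (Finset.filter_subset _ _)) ?_
        simp
      calc ((misFam (∅ : Finset α) r).card : ℝ) ≤ 1 := by exact_mod_cast this
        _ = (3 : ℝ) ^ (((∅ : Finset α).card : ℝ) / 3) := by simp
    · -- choose a vertex of minimum closed degree
      set N : α → Finset α := fun u => V.filter (fun w => r u w ∨ r w u ∨ w = u) with hNdef
      obtain ⟨v, hvV, hvmin⟩ := V.exists_min_image (fun u => (N u).card) hne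
      have hNsub : ∀ u, N u ⊆ V := fun u => Finset.filter_subset _ _
      have hself : ∀ u ∈ V, u ∈ N u := by
        intro u hu; simp [hNdef, hu]
      -- key covering
      have hsub : misFam V r ⊆
          (N v).biUnion (fun u => (misFam (V \ N u) r).image (insert u)) := by
        intro S hS
        simp only [misFam, Finset.mem_filter, Finset.mem_powerset] at hS
        obtain ⟨hSV, hind, hdom⟩ := hS
        have hu : ∃ u ∈ S, u ∈ N v := by
          by_cases hvS : v ∈ S
          · exact ⟨v, hvS, hself v hvV⟩
          · obtain ⟨u, huS, hru⟩ := hdom v hvV hvS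
            refine ⟨u, huS, ?_⟩
            simp only [hNdef, Finset.mem_filter]
            exact ⟨hSV huS, Or.inr (Or.inl hru)⟩
        obtain ⟨u, huS, huNv⟩ := hu
        have huV : u ∈ V := hSV huS
        refine Finset.mem_biUnion.2 ⟨u, huNv, Finset.mem_image.2 ⟨S.erase u, ?_, Finset.insert_erase huS⟩⟩
        simp only [misFam, Finset.mem_filter, Finset.mem_powerset]
        refine ⟨?_, ?_, ?_⟩
        · intro w hw
          have hwS := Finset.mem_of_mem_erase hw
          have hwu := Finset.ne_of_mem_erase hw
          refine Finset.mem_sdiff.2 ⟨hSV hwS, ?_⟩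
          intro hwN
          rcases (Finset.mem_filter.1 hwN).2 with h | h | h
          · exact hind u huS w hwS h
          · exact hind w hwS u huS h
          · exact hwu h
        · intro a ha b hb
          exact hind a (Finset.mem_of_mem_erase ha) b (Finset.mem_of_mem_erase hb)
        · intro w hwV' hwS'
          have hwV := (Finset.mem_sdiff.1 hwV').1
          have hwNu := (Finset.mem_sdiff.1 hwV').2
          have hwS : w ∉ S := by
            intro hwS
            exact hwS' (Finset.mem_erase.2 ⟨fun h => hwNu (h ▸ hself u huV), hwS⟩)
          obtain ⟨x, hxS, hrx⟩ := hdom w hwV hwS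
          refine ⟨x, Finset.mem_erase.2 ⟨?_, hxS⟩, hrx⟩
          rintro rfl
          refine hwNu ?_
          simp only [hNdef, Finset.mem_filter]
          exact ⟨hwV, Or.inl hrx⟩
      have hcard1 : (misFam V r).card ≤ ∑ u ∈ N v, (misFam (V \ N u) r).card := by
        calc (misFam V r).card
            ≤ ((N v).biUnion (fun u => (misFam (V \ N u) r).image (insert u))).card :=
              Finset.card_le_card hsub
          _ ≤ ∑ u ∈ N v, ((misFam (V \ N u) r).image (insert u)).card :=
              Finset.card_biUnion_le
          _ ≤ ∑ u ∈ N v, (misFam (V \ N u) r).card :=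
              Finset.sum_le_sum fun u _ => Finset.card_image_le
      have key : ∀ u ∈ N v, ((misFam (V \ N u) r).card : ℝ) ≤
          (3 : ℝ) ^ (((V.card : ℝ) - ((N v).card : ℝ)) / 3) := by
        intro u huNv
        have huV : u ∈ V := hNsub v huNv
        have hc : (V \ N u).card = V.card - (N u).card := Finset.card_sdiff_of_subset (hNsub u)
        have h1 : (N u).card ≤ V.card := Finset.card_le_card (hNsub u)
        have h2 : 1 ≤ (N u).card := Finset.card_pos.2 ⟨u, hself u huV⟩
        have hle : (V \ N u).card ≤ n := by omega
        refine (ih (V \ N u) hle).trans (Real.rpow_le_rpow_of_exponent_le (by norm_num) ?_)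
        have hcast : ((V \ N u).card : ℝ) = (V.card : ℝ) - ((N u).card : ℝ) := by
          rw [hc]; exact Nat.cast_sub h1
        rw [hcast]
        have hmin : ((N v).card : ℝ) ≤ ((N u).card : ℝ) := by exact_mod_cast hvmin u huV
        linarith
      have hk1 : 1 ≤ (N v).card := Finset.card_pos.2 ⟨v, hself v hvV⟩
      have hrpos : (0 : ℝ) ≤ (3 : ℝ) ^ (((V.card : ℝ) - ((N v).card : ℝ)) / 3) :=
        (Real.rpow_pos_of_pos (by norm_num) _).le
      calc ((misFam V r).card : ℝ)
          ≤ ∑ u ∈ N v, ((misFam (V \ N u) r).card : ℝ) := by exact_mod_cast hcard1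
        _ ≤ ∑ _u ∈ N v, (3 : ℝ) ^ (((V.card : ℝ) - ((N v).card : ℝ)) / 3) :=
            Finset.sum_le_sum key
        _ = ((N v).card : ℝ) * (3 : ℝ) ^ (((V.card : ℝ) - ((N v).card : ℝ)) / 3) := by
            rw [Finset.sum_const, nsmul_eq_mul]
        _ ≤ (3 : ℝ) ^ (((N v).card : ℝ) / 3) *
              (3 : ℝ) ^ (((V.card : ℝ) - ((N v).card : ℝ)) / 3) :=
            mul_le_mul_of_nonneg_right (nat_le_rpow _) hrpos
        _ = (3 : ℝ) ^ ((V.card : ℝ) / 3) := by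
            rw [← Real.rpow_add (by norm_num)]
            congr 1
            ring

/-- Closure under the positive (negation-free) definite clauses of `P`. -/
def ClosedPos {α : Type} (P : LPProgram α) (N : Set α) : Prop :=
  ∀ c ∈ P, ∀ h : α, c.head = some h → c.neg = ∅ → (↑c.pos : Set α) ⊆ N → h ∈ N

/-- Least set closed under positive clauses. -/
def Q0 {α : Type} (P : LPProgram α) : Set α := ⋂₀ {N : Set α | ClosedPos P N}

/-- Least set closed under positive clauses and containing the heads of all
clauses with `t` in the negative body. -/
def QQ {α : Type} (P : LPProgram α) (t : α) : Set α :=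
  ⋂₀ {N : Set α | ClosedPos P N ∧
    ∀ c ∈ P, ∀ h : α, c.head = some h → t ∈ c.neg → h ∈ N}

lemma closedPos_Q0 {α : Type} (P : LPProgram α) : ClosedPos P (Q0 P) := by
  intro c hc h hh hneg hsub
  intro N hN
  exact hN c hc h hh hneg (hsub.trans (Set.sInter_subset_of_mem hN))

lemma closedPos_QQ {α : Type} (P : LPProgram α) (t : α) : ClosedPos P (QQ P t) := by
  intro c hc h hh hneg hsub
  intro N hN
  exact hN.1 c hc h hh hneg (hsub.trans (Set.sInter_subset_of_mem hN))

lemma QQ_head {α : Type} (P : LPProgram α) (t : α) :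
    ∀ c ∈ P, ∀ h : α, c.head = some h → t ∈ c.neg → h ∈ QQ P t := by
  intro c hc h hh ht N hN
  exact hN.2 c hc h hh ht

section Main

variable {α : Type} [DecidableEq α] (P : LPProgram α)

lemma card_facts (h2 : IsTProgram P 2) {c : LPClause α} (hc : c ∈ P) {h : α}
    (hh : c.head = some h) : c.pos.card + c.neg.card ≤ 1 := by
  have := h2 c hc
  rw [hh] at this
  simpa using this

/-- If `M` is stable (in fact: closed) and `t ∉ M` then `QQ P t ⊆ M`. -/
lemma QQ_subset (h2 : IsTProgram P 2) {M : Finset α} (hcl : ClosedUnder P M ↑M)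
    {t : α} (htM : t ∉ M) : QQ P t ⊆ ↑M := by
  apply Set.sInter_subset_of_mem
  constructor
  · intro c hc h hh hneg hsub
    refine hcl c hc h hh ?_ hsub
    intro b hb
    rw [hneg] at hb
    simp at hb
  · intro c hc h hh ht
    have hcard := card_facts P h2 hc hh
    have hneg1 : c.neg.card ≤ 1 := by omega
    have hpos0 : c.pos = ∅ := by
      have : 1 ≤ c.neg.card := Finset.card_pos.2 ⟨t, ht⟩
      have : c.pos.card = 0 := by omega
      exact Finset.card_eq_zero.1 this
    refine hcl c hc h hh ?_ ?_
    · intro b hb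
      have : b = t := Finset.card_le_one.1 hneg1 b hb t ht
      rw [this]; exact htM
    · rw [hpos0]; simp

lemma Q0_subset {M : Finset α} (hcl : ClosedUnder P M ↑M) : Q0 P ⊆ ↑M := by
  apply Set.sInter_subset_of_mem
  intro c hc h hh hneg hsub
  refine hcl c hc h hh ?_ hsub
  intro b hb
  rw [hneg] at hb
  simp at hb

/-- The set `D` of atoms occurring in negative bodies of definite clauses. -/
noncomputable def Dset : Finset α :=
  P.atoms.filter fun b => ∃ c ∈ P, ∃ h : α, c.head = some h ∧ b ∈ c.neg

/-- The vertex set of the derived graph. -/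
noncomputable def Vset : Finset α :=
  (Dset P).filter fun v => v ∉ Q0 P ∧ v ∉ QQ P v

/-- The decomposition of a stable model. -/
lemma stable_eq (h2 : IsTProgram P 2) {M : Finset α} (hcl : ClosedUnder P M ↑M)
    (hmin : ∀ N : Set α, ClosedUnder P M N → ↑M ⊆ N) :
    (↑M : Set α) = Q0 P ∪ ⋃ t ∈ Vset P \ M, QQ P t := by
  apply Set.Subset.antisymm
  · -- minimality: the RHS is closed under the reduct
    apply hmin
    intro c hc h hh hnegM hposU
    rcases Finset.eq_empty_or_nonempty c.neg with hneg | ⟨t, ht⟩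
    · -- a positive clause
      rcases Finset.eq_empty_or_nonempty c.pos with hpos | ⟨b, hb⟩
      · exact Or.inl (closedPos_Q0 P c hc h hh hneg (by rw [hpos]; simp))
      · have hcard := card_facts P h2 hc hh
        have hpos1 : c.pos.card ≤ 1 := by omega
        have hposb : (↑c.pos : Set α) = {b} := by
          have : c.pos = {b} := by
            apply Finset.eq_singleton_iff_unique_mem.2
            exact ⟨hb, fun x hx => Finset.card_le_one.1 hpos1 x hx b hb⟩
          rw [this]; simp
        have hbU : b ∈ Q0 P ∪ ⋃ t ∈ Vset P \ M, QQ P t := hposU (by simp [hb])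
        rcases hbU with hbQ | hbU
        · exact Or.inl (closedPos_Q0 P c hc h hh hneg (by rw [hposb]; simpa using hbQ))
        · rw [Set.mem_iUnion₂] at hbU
          obtain ⟨t, htT, hbQQ⟩ := hbU
          refine Or.inr (Set.mem_iUnion₂.2 ⟨t, htT, ?_⟩)
          exact closedPos_QQ P t c hc h hh hneg (by rw [hposb]; simpa using hbQQ)
    · -- a clause with a negative body atom t
      have htM : t ∉ M := hnegM t ht
      have htA : t ∈ P.atoms := by
        have h1 : t ∈ c.atoms := by
          simp only [LPClause.atoms, Finset.mem_union]
          exact Or.inr ht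
        have hle : c.atoms ⊆ P.atoms := Finset.le_sup (f := LPClause.atoms) hc
        exact hle h1
      have htD : t ∈ Dset P := by
        rw [Dset, Finset.mem_filter]
        exact ⟨htA, c, hc, h, hh, ht⟩
      have htV : t ∈ Vset P := by
        rw [Vset, Finset.mem_filter]
        refine ⟨htD, fun hQ => htM (Q0_subset P hcl hQ), fun hQ => htM (QQ_subset P h2 hcl htM hQ)⟩
      refine Or.inr (Set.mem_iUnion₂.2 ⟨t, Finset.mem_sdiff.2 ⟨htV, htM⟩, ?_⟩)
      exact QQ_head P t c hc h hh ht
  · -- the RHS is contained in M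
    apply Set.union_subset
    · exact Q0_subset P hcl
    · refine Set.iUnion₂_subset fun t htT => ?_
      exact QQ_subset P h2 hcl (Finset.mem_sdiff.1 htT).2

lemma stable_mem_misFam (h2 : IsTProgram P 2) {M : Finset α} (hM : IsStable P M) :
    Vset P \ M ∈ misFam (Vset P) (fun u v => v ∈ QQ P u) := by
  obtain ⟨hcl, hmin, -⟩ := hM
  simp only [misFam, Finset.mem_filter, Finset.mem_powerset]
  refine ⟨Finset.sdiff_subset, ?_, ?_⟩
  · intro u hu v hv hr
    have huM := (Finset.mem_sdiff.1 hu).2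
    have hvM := (Finset.mem_sdiff.1 hv).2
    exact hvM (QQ_subset P h2 hcl huM hr)
  · intro w hwV hwT
    have hwM : w ∈ M := by
      by_contra hwM
      exact hwT (Finset.mem_sdiff.2 ⟨hwV, hwM⟩)
    have hwU : w ∈ Q0 P ∪ ⋃ t ∈ Vset P \ M, QQ P t := by
      rw [← stable_eq P h2 hcl hmin]
      exact hwM
    have hwQ0 : w ∉ Q0 P := ((Finset.mem_filter.1 hwV).2).1
    rcases hwU with h | h
    · exact absurd h hwQ0
    · rw [Set.mem_iUnion₂] at h
      obtain ⟨t, htT, hw⟩ := h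
      exact ⟨t, htT, hw⟩

lemma stable_inj (h2 : IsTProgram P 2) :
    Set.InjOn (fun M : Finset α => Vset P \ M) {M : Finset α | IsStable P M} := by
  intro M hM M' hM' hEq
  simp only at hEq
  obtain ⟨hcl, hmin, -⟩ := hM
  obtain ⟨hcl', hmin', -⟩ := hM'
  apply Finset.coe_injective
  rw [stable_eq P h2 hcl hmin, stable_eq P h2 hcl' hmin', hEq]

end Main

/-- There is a constant `C > 0` such that every 2-program with `n` atoms has
at most `C * 3 ^ (n / 3)` stable models. -/
theorem stmt_11 :
    ∃ C : ℝ, 0 < C ∧ ∀ (α : Type) [DecidableEq α] (P : LPProgram α),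
      IsTProgram P 2 →
      ({M : Finset α | IsStable P M}.ncard : ℝ) ≤
        C * (3 : ℝ) ^ ((P.atoms.card : ℝ) / 3) := by

  refine ⟨1, one_pos, ?_⟩
  intro α _ P h2
  rw [one_mul]
  set r : α → α → Prop := fun u v => v ∈ QQ P u with hr
  have himg : (fun M : Finset α => Vset P \ M) '' {M : Finset α | IsStable P M} ⊆
      ↑(misFam (Vset P) r) := by
    rintro S ⟨M, hM, rfl⟩
    exact stable_mem_misFam P h2 hM
  have h1 : {M : Finset α | IsStable P M}.ncard =
      ((fun M : Finset α => Vset P \ M) '' {M : Finset α | IsStable P M}).ncard :=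
    (Set.ncard_image_of_injOn (stable_inj P h2)).symm
  have h3 : ((fun M : Finset α => Vset P \ M) '' {M : Finset α | IsStable P M}).ncard ≤
      (misFam (Vset P) r).card := by
    have := Set.ncard_le_ncard himg (misFam (Vset P) r).finite_toSet
    simpa [Set.ncard_coe_finset] using this
  have h4 : ((misFam (Vset P) r).card : ℝ) ≤ (3 : ℝ) ^ (((Vset P).card : ℝ) / 3) :=
    misFam_card_le r (Vset P).card (Vset P) le_rfl
  have h5 : ((Vset P).card : ℝ) / 3 ≤ ((P.atoms.card : ℝ)) / 3 := by
    have hsub : Vset P ⊆ P.atoms := by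
      intro x hx
      exact Finset.filter_subset _ _ (Finset.filter_subset _ _ hx)
    have := (Nat.cast_le (α := ℝ)).2 (Finset.card_le_card hsub)
    linarith
  calc ({M : Finset α | IsStable P M}.ncard : ℝ)
      ≤ ((misFam (Vset P) r).card : ℝ) := by rw [h1]; exact_mod_cast h3
    _ ≤ (3 : ℝ) ^ (((Vset P).card : ℝ) / 3) := h4
    _ ≤ (3 : ℝ) ^ ((P.atoms.card : ℝ) / 3) :=
        Real.rpow_le_rpow_of_exponent_le (by norm_num) h5
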